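/- Let S and T be probability distributions on X × Y with marginals S_X, T_X, let F be a class of score functions, and fix ρ > 0, ε > 0, p ≥ 1 (all relevant integrands measurable and integrable). Suppose f* ∈ F minimizes f ↦ R^{(ρ)}_T(f) + R^{(ρ)}_S(f) over F, and set λ = R^{(ρ)}_T(f*) + R^{(ρ)}_S(f*). Then for every f ∈ F: R^{rob}_T(f) ≤ R^{(ρ)}_S(f) + { disp^{rob,(ρ)}_{T_X}(f*, f) − disp^{(ρ)}_{S_X}(f*, f) } + λ. -/

import Mathlib

noncomputable section
open MeasureTheory Finset Set

namespace RobustUDA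

/-- The input space: `ℝ^d`. -/
abbrev Inp (d : ℕ) := Fin d → ℝ

variable {d C : ℕ}

/-- `ℓ_p`-norm of a vector in `ℝ^d`. -/
def pnorm (p : ℝ) (v : Inp d) : ℝ := (∑ i, |v i| ^ p) ^ (1 / p)

/-- The `ε`-ball centered at `x` in the `ℓ_p`-norm. -/
def ball (p ε : ℝ) (x : Inp d) : Set (Inp d) := {x' | pnorm p (fun i => x i - x' i) ≤ ε}

open Classical in
/-- Indicator function of a proposition, real valued. -/
def ind (P : Prop) : ℝ := if P then 1 else 0

/-- The ramp function `Φ_ρ`. -/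
def ramp (ρ t : ℝ) : ℝ := if t ≤ 0 then 1 else if t ≤ ρ then 1 - t / ρ else 0

/-- The margin `M_f(x,y) = f_y(x) - max_{y' ≠ y} f_{y'}(x)`. -/
def margin (f : Inp d → Fin C → ℝ) (x : Inp d) (y : Fin C) : ℝ :=
  f x y - sSup (f x '' {y' | y' ≠ y})

/-- Standard (0-1) risk of a classifier `hf` on a distribution `D` on `X × Y`. -/
def stdRisk (D : Measure (Inp d × Fin C)) (hf : Inp d → Fin C) : ℝ :=
  ∫ z, ind (z.2 ≠ hf z.1) ∂D

/-- Robust (0-1) risk of a classifier `hf`. -/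
def robustRisk (p ε : ℝ) (D : Measure (Inp d × Fin C)) (hf : Inp d → Fin C) : ℝ :=
  ∫ z, sSup ((fun x' => ind (z.2 ≠ hf x')) '' ball p ε z.1) ∂D

/-- Margin risk `R^{(ρ)}_D(f)`. -/
def marginRisk (ρ : ℝ) (D : Measure (Inp d × Fin C)) (f : Inp d → Fin C → ℝ) : ℝ :=
  ∫ z, ramp ρ (margin f z.1 z.2) ∂D

/-- Robust margin risk `R^{rob,(ρ)}_D(f)`. -/
def robustMarginRisk (p ε ρ : ℝ) (D : Measure (Inp d × Fin C)) (f : Inp d → Fin C → ℝ) : ℝ :=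
  ∫ z, sSup ((fun x' => ramp ρ (margin f x' z.2)) '' ball p ε z.1) ∂D

/-- Margin disparity `disp^{(ρ)}_{D_X}(f', f)`, where `hf'` is the classifier induced by `f'`. -/
def marginDisp (ρ : ℝ) (DX : Measure (Inp d)) (hf' : Inp d → Fin C)
    (f : Inp d → Fin C → ℝ) : ℝ :=
  ∫ x, ramp ρ (margin f x (hf' x)) ∂DX

/-- 0-1 robust disparity `disp^{rob}_{D_X}(f', f)`. -/
def robDisp (p ε : ℝ) (DX : Measure (Inp d)) (hf' hf : Inp d → Fin C) : ℝ :=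
  ∫ x, sSup ((fun x' => ind (hf' x ≠ hf x')) '' ball p ε x) ∂DX

/-- Robust margin disparity `disp^{rob,(ρ)}_{D_X}(f', f)`. -/
def robMarginDisp (p ε ρ : ℝ) (DX : Measure (Inp d)) (hf' : Inp d → Fin C)
    (f : Inp d → Fin C → ℝ) : ℝ :=
  ∫ x, sSup ((fun x' => ramp ρ (margin f x' (hf' x))) '' ball p ε x) ∂DX

/-- Point-wise local Lipschitz constant `L_f(x, ε)` (w.r.t. the `ℓ_p` ball and `ℓ₁` output norm). -/
def locLip (p ε : ℝ) (f : Inp d → Fin C → ℝ) (x : Inp d) : ℝ :=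
  sSup ((fun x' => (∑ c, |f x' c - f x c|) / pnorm p (fun i => x' i - x i)) ''
    {x' | x' ∈ ball p ε x ∧ x' ≠ x})

/-- Topological support of a measure on the input space. -/
def msupport (μ : Measure (Inp d)) : Set (Inp d) :=
  {x | ∀ U : Set (Inp d), IsOpen U → x ∈ U → 0 < μ U}

/-- Local Lipschitz constant `L_f(D_X, ε)` over the support of `D_X`. -/
def locLipOn (p ε : ℝ) (f : Inp d → Fin C → ℝ) (μ : Measure (Inp d)) : ℝ :=
  sSup (locLip p ε f '' msupport μ)

/-- Robust margin disparity discrepancy `d^{rob,(ρ)}_{f,F}(S_X, T_X)` where `cl` assigns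
to each score function its induced classifier. -/
def discrepancy (p ε ρ : ℝ) (F : Set (Inp d → Fin C → ℝ))
    (cl : (Inp d → Fin C → ℝ) → Inp d → Fin C)
    (SX TX : Measure (Inp d)) (f : Inp d → Fin C → ℝ) : ℝ :=
  sSup ((fun f' => robMarginDisp p ε ρ TX (cl f') f - marginDisp ρ SX (cl f') f) '' F)

/-- The class `Π₁F` of component functions of score functions in `F`. -/
def Pi1 (F : Set (Inp d → Fin C → ℝ)) : Set (Inp d → ℝ) :=
  {g | ∃ f ∈ F, ∃ y : Fin C, g = fun x => f x y}

/-- The class `Π_H F` where `H = {h_f : f ∈ F}` is given by the classifier assignment `cl`. -/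
def PiH (F : Set (Inp d → Fin C → ℝ)) (cl : (Inp d → Fin C → ℝ) → Inp d → Fin C) :
    Set (Inp d → ℝ) :=
  {g | ∃ f ∈ F, ∃ f' ∈ F, g = fun x => f x (cl f' x)}

/-- Rademacher complexity `ℜ_{n,D}(G)` of a class `G` of real functions on `Z`. -/
def rademacher (n : ℕ) {Z : Type*} [MeasurableSpace Z] (D : Measure Z) (G : Set (Z → ℝ)) : ℝ :=
  ∫ z : Fin n → Z, ∫ σ : Fin n → Bool,
      sSup ((fun g => (n : ℝ)⁻¹ * ∑ i, (if σ i then (1 : ℝ) else -1) * g (z i)) '' G)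
    ∂(Measure.pi fun _ => (PMF.uniformOfFintype Bool).toMeasure) ∂(Measure.pi fun _ => D)

/-!
On the target, route the 0-1 loss through the label `h_{f*}(x)`:
`1{y ≠ h_f(x')} ≤ 1{y ≠ h_{f*}(x)} + 1{h_{f*}(x) ≠ h_f(x')}`. Since a classifier's label has
maximal score, every other label has nonpositive margin, so each indicator is dominated by a
ramp of a margin: the first by `Φ_ρ(M_{f*}(x,y))`, the second by `Φ_ρ(M_f(x', h_{f*}(x)))`.
Taking the supremum over `x'` and integrating gives
`R^{rob}_T(f) ≤ disp^{rob,(ρ)}_{T_X}(f*, f) + R^{(ρ)}_T(f*)`. On the source, the same routing gives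
`Φ_ρ(M_f(x, h_{f*}(x))) ≤ Φ_ρ(M_f(x,y)) + Φ_ρ(M_{f*}(x,y))`, hence
`disp^{(ρ)}_{S_X}(f*, f) ≤ R^{(ρ)}_S(f) + R^{(ρ)}_S(f*)`. Subtracting the two bounds proves the claim.
-/

lemma ramp_nonneg (ρ t : ℝ) : 0 ≤ ramp ρ t := by
  unfold ramp
  split_ifs with h₀ h₁
  · exact zero_le_one
  · rw [sub_nonneg, div_le_one (by linarith)]
    exact h₁
  · exact le_rfl

lemma ramp_le_one (ρ t : ℝ) : ramp ρ t ≤ 1 := by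
  unfold ramp
  split_ifs with h₀ h₁
  · exact le_rfl
  · have : 0 ≤ t / ρ := div_nonneg (not_le.mp h₀).le (by linarith)
    linarith
  · exact zero_le_one

lemma ramp_of_nonpos {ρ t : ℝ} (ht : t ≤ 0) : ramp ρ t = 1 := if_pos ht

lemma ind_nonneg (P : Prop) : 0 ≤ ind P := by
  unfold ind; split_ifs <;> norm_num

lemma ind_le_one (P : Prop) : ind P ≤ 1 := by
  unfold ind; split_ifs <;> norm_num

lemma ind_ne_le_add {α : Type*} (a b c : α) : ind (a ≠ c) ≤ ind (a ≠ b) + ind (b ≠ c) := by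
  by_cases hab : a = b
  · subst hab
    simp [ind]
  · have : ind (a ≠ b) = 1 := if_pos hab
    linarith [ind_le_one (a ≠ c), ind_nonneg (b ≠ c)]

lemma margin_nonpos_of_le {f : Inp d → Fin C → ℝ} {x : Inp d} {y y' : Fin C}
    (hne : y' ≠ y) (hle : f x y ≤ f x y') : margin f x y ≤ 0 := by
  have hbdd : BddAbove (f x '' {z | z ≠ y}) := (Set.toFinite _).bddAbove
  rw [margin, sub_nonpos]
  exact hle.trans (le_csSup hbdd ⟨y', hne, rfl⟩)

lemma ind_ne_le_ramp_margin (ρ : ℝ) {f : Inp d → Fin C → ℝ} {x : Inp d} {y y' : Fin C}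
    (hle : f x y ≤ f x y') : ind (y ≠ y') ≤ ramp ρ (margin f x y) := by
  by_cases h : y = y'
  · simp only [ind, h, ne_eq, not_true_eq_false, if_false]
    exact ramp_nonneg _ _
  · rw [ramp_of_nonpos (margin_nonpos_of_le (Ne.symm h) hle)]
    exact ind_le_one _

lemma ramp_margin_le_add_ind (ρ : ℝ) (f : Inp d → Fin C → ℝ) (x : Inp d) (y c : Fin C) :
    ramp ρ (margin f x c) ≤ ramp ρ (margin f x y) + ind (y ≠ c) := by
  by_cases h : y = c
  · subst h
    simp [ind]
  · have : ind (y ≠ c) = 1 := if_pos h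
    linarith [ramp_le_one ρ (margin f x c), ramp_nonneg ρ (margin f x y)]

lemma sSup_image_le_sSup_image_add {α : Type*} {s : Set α} {u v : α → ℝ} {c : ℝ}
    (hv : ∀ x ∈ s, 0 ≤ v x) (hbdd : BddAbove (v '' s)) (hc : 0 ≤ c)
    (h : ∀ x ∈ s, u x ≤ v x + c) : sSup (u '' s) ≤ sSup (v '' s) + c := by
  have hsup : 0 ≤ sSup (v '' s) := Real.sSup_nonneg (forall_mem_image.mpr hv)
  refine Real.sSup_le (forall_mem_image.mpr fun x hx => ?_) (add_nonneg hsup hc)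
  linarith [h x hx, le_csSup hbdd (mem_image_of_mem v hx)]

lemma sSup_ind_ne_le_sSup_ramp_margin_add (ρ ε p : ℝ) {f f' : Inp d → Fin C → ℝ}
    {h h' : Inp d → Fin C} (hf : ∀ x y, f x y ≤ f x (h x)) (hf' : ∀ x y, f' x y ≤ f' x (h' x))
    (x : Inp d) (y : Fin C) :
    sSup ((fun x' => ind (y ≠ h x')) '' ball p ε x) ≤
      sSup ((fun x' => ramp ρ (margin f x' (h' x))) '' ball p ε x) + ramp ρ (margin f' x y) := by
  refine sSup_image_le_sSup_image_add (fun _ _ => ramp_nonneg _ _)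
    ⟨1, forall_mem_image.mpr fun _ _ => ramp_le_one _ _⟩ (ramp_nonneg _ _) fun x' _ => ?_
  calc ind (y ≠ h x') ≤ ind (y ≠ h' x) + ind (h' x ≠ h x') := ind_ne_le_add _ _ _
    _ ≤ ramp ρ (margin f' x y) + ramp ρ (margin f x' (h' x)) :=
        add_le_add (ind_ne_le_ramp_margin ρ (hf' x y)) (ind_ne_le_ramp_margin ρ (hf x' _))
    _ = _ := add_comm _ _

lemma integrable_comp_fst_of_map {α β : Type*} [MeasurableSpace α] [MeasurableSpace β]
    {μ : Measure (α × β)} {g : α → ℝ} (hg : Integrable g (μ.map Prod.fst)) :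
    Integrable (fun z => g z.1) μ :=
  hg.comp_measurable measurable_fst

theorem robustRisk_le_robMarginDisp_add_marginRisk (ρ ε p : ℝ) (T : Measure (Inp d × Fin C))
    {f f' : Inp d → Fin C → ℝ} {h h' : Inp d → Fin C}
    (hf : ∀ x y, f x y ≤ f x (h x)) (hf' : ∀ x y, f' x y ≤ f' x (h' x))
    (hrisk : Integrable (fun z => sSup ((fun x' => ind (z.2 ≠ h x')) '' ball p ε z.1)) T)
    (hdisp : Integrable (fun x => sSup ((fun x' => ramp ρ (margin f x' (h' x))) '' ball p ε x))
      (T.map Prod.fst))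
    (hmargin : Integrable (fun z => ramp ρ (margin f' z.1 z.2)) T) :
    robustRisk p ε T h ≤ robMarginDisp p ε ρ (T.map Prod.fst) h' f + marginRisk ρ T f' := by
  rw [robustRisk, robMarginDisp, marginRisk,
    integral_map measurable_fst.aemeasurable hdisp.aestronglyMeasurable,
    ← integral_add (integrable_comp_fst_of_map hdisp) hmargin]
  exact integral_mono hrisk ((integrable_comp_fst_of_map hdisp).add hmargin) fun z =>
    sSup_ind_ne_le_sSup_ramp_margin_add ρ ε p hf hf' z.1 z.2

theorem marginDisp_le_marginRisk_add_marginRisk (ρ : ℝ) (S : Measure (Inp d × Fin C))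
    {f f' : Inp d → Fin C → ℝ} {h' : Inp d → Fin C} (hf' : ∀ x y, f' x y ≤ f' x (h' x))
    (hdisp : Integrable (fun x => ramp ρ (margin f x (h' x))) (S.map Prod.fst))
    (hf : Integrable (fun z => ramp ρ (margin f z.1 z.2)) S)
    (hmargin : Integrable (fun z => ramp ρ (margin f' z.1 z.2)) S) :
    marginDisp ρ (S.map Prod.fst) h' f ≤ marginRisk ρ S f + marginRisk ρ S f' := by
  rw [marginDisp, marginRisk, marginRisk,
    integral_map measurable_fst.aemeasurable hdisp.aestronglyMeasurable,
    ← integral_add hf hmargin]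
  refine integral_mono (integrable_comp_fst_of_map hdisp) (hf.add hmargin) fun z => ?_
  calc ramp ρ (margin f z.1 (h' z.1))
      ≤ ramp ρ (margin f z.1 z.2) + ind (z.2 ≠ h' z.1) := ramp_margin_le_add_ind ρ f z.1 z.2 _
    _ ≤ ramp ρ (margin f z.1 z.2) + ramp ρ (margin f' z.1 z.2) :=
        add_le_add_right (ind_ne_le_ramp_margin ρ (hf' z.1 z.2)) _

theorem robustRisk_le_marginRisk_add_disparity_gap_general {d C : ℕ}
    (ρ ε p : ℝ)
    (S T : Measure (Inp d × Fin C))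
    (F : Set (Inp d → Fin C → ℝ))
    (cl : (Inp d → Fin C → ℝ) → Inp d → Fin C)
    (hcl : ∀ (g : Inp d → Fin C → ℝ) (x : Inp d) (y : Fin C), g x y ≤ g x (cl g x))
    (fs : Inp d → Fin C → ℝ) (hfsF : fs ∈ F)
    (hint1 : ∀ f ∈ F,
      Integrable (fun z => sSup ((fun x' => ind (z.2 ≠ cl f x')) '' ball p ε z.1)) T)
    (hint2 : ∀ f ∈ F, Integrable (fun z => ramp ρ (margin f z.1 z.2)) S)
    (hint3 : ∀ f ∈ F, Integrable (fun z => ramp ρ (margin f z.1 z.2)) T)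
    (hint4 : ∀ f ∈ F, Integrable
      (fun x => sSup ((fun x' => ramp ρ (margin f x' (cl fs x))) '' ball p ε x))
      (T.map Prod.fst))
    (hint5 : ∀ f ∈ F, Integrable (fun x => ramp ρ (margin f x (cl fs x))) (S.map Prod.fst)) :
    ∀ f ∈ F, robustRisk p ε T (cl f) ≤
      marginRisk ρ S f +
        (robMarginDisp p ε ρ (T.map Prod.fst) (cl fs) f -
          marginDisp ρ (S.map Prod.fst) (cl fs) f) +
        (marginRisk ρ T fs + marginRisk ρ S fs) := by
  intro f hf
  have target := robustRisk_le_robMarginDisp_add_marginRisk ρ ε p T (hcl f) (hcl fs)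
    (hint1 f hf) (hint4 f hf) (hint3 fs hfsF)
  have source := marginDisp_le_marginRisk_add_marginRisk ρ S (hcl fs)
    (hint5 f hf) (hint2 f hf) (hint2 fs hfsF)
  linarith

/-- **Proposition 4.3.** If `f* ∈ F` minimizes
`f ↦ R^{(ρ)}_T(f) + R^{(ρ)}_S(f)` over `F` and `λ = R^{(ρ)}_T(f*) + R^{(ρ)}_S(f*)`, then for
every `f ∈ F`:
`R^{rob}_T(f) ≤ R^{(ρ)}_S(f) + (disp^{rob,(ρ)}_{T_X}(f*, f) − disp^{(ρ)}_{S_X}(f*, f)) + λ`. -/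
theorem robustRisk_le_marginRisk_add_disparity_gap {d C : ℕ} (hC : 2 ≤ C)
    (ρ ε p : ℝ) (hρ : 0 < ρ) (hε : 0 < ε) (hp : 1 ≤ p)
    (S T : Measure (Inp d × Fin C)) [IsProbabilityMeasure S] [IsProbabilityMeasure T]
    (F : Set (Inp d → Fin C → ℝ))
    (cl : (Inp d → Fin C → ℝ) → Inp d → Fin C)
    (hcl : ∀ (g : Inp d → Fin C → ℝ) (x : Inp d) (y : Fin C), g x y ≤ g x (cl g x))
    (fs : Inp d → Fin C → ℝ) (hfsF : fs ∈ F)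
    (hmin : ∀ g ∈ F, marginRisk ρ T fs + marginRisk ρ S fs ≤ marginRisk ρ T g + marginRisk ρ S g)
    (hint1 : ∀ f ∈ F,
      Integrable (fun z => sSup ((fun x' => ind (z.2 ≠ cl f x')) '' ball p ε z.1)) T)
    (hint2 : ∀ f ∈ F, Integrable (fun z => ramp ρ (margin f z.1 z.2)) S)
    (hint3 : ∀ f ∈ F, Integrable (fun z => ramp ρ (margin f z.1 z.2)) T)
    (hint4 : ∀ f ∈ F, Integrable
      (fun x => sSup ((fun x' => ramp ρ (margin f x' (cl fs x))) '' ball p ε x))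
      (T.map Prod.fst))
    (hint5 : ∀ f ∈ F, Integrable (fun x => ramp ρ (margin f x (cl fs x))) (S.map Prod.fst)) :
    ∀ f ∈ F, robustRisk p ε T (cl f) ≤
      marginRisk ρ S f +
        (robMarginDisp p ε ρ (T.map Prod.fst) (cl fs) f -
          marginDisp ρ (S.map Prod.fst) (cl fs) f) +
        (marginRisk ρ T fs + marginRisk ρ S fs) :=
  robustRisk_le_marginRisk_add_disparity_gap_general ρ ε p S T F cl hcl fs hfsF hint1 hint2 hint3
    hint4 hint5

end RobustUDA
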